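/- There exists a universal constant C > 0 such that the following holds. Let Σ be a finite set, P a pmf on Σ, N ≥ 2, and δ ∈ (0,1). Draw N i.i.d. samples from P and let T_i be the number of samples equal to i; define the add-1 estimator Q by Q(i) := (T_i + 1)/(N + |Σ|) for each i ∈ Σ. Then with probability at least 1−δ, D(P‖Q) ≤ C·|Σ|·log(|Σ|/δ)·log(N)/N. -/

import Mathlib

/-!
Put `L = log (2|Σ|/δ)`. Chernoff bounds for the binomial counts `T_i` show that with probability
at least `1 - δ` every `T_i` lies between `N P_i - √(4 N P_i L)` and `N P_i + √(4 N P_i L) + 2 L`.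
On that event, rescaling `Q` by `c = (N + |Σ|)/N` and using `log c ≤ c - 1` bounds `D(P‖Q)` by
`∑ P_i log (P_i / R_i) + R_i - P_i` with `R_i = (T_i + 1)/N`. A symbol with `N P_i ≥ 16 L`
contributes at most the χ²-term `(N P_i - T_i - 1)² / (N (T_i + 1)) = O(L/N)`, and a rarer one at
most `P_i log N + (T_i + 1 - N P_i)/N = O(L log N / N)`. Summing over the `|Σ|` symbols gives the
bound.
-/

open scoped Classical

noncomputable section

/-- Probability of an event under a (finitely supported) density `p`. -/
def prob {Ω : Type*} [Fintype Ω] (p : Ω → ℝ) (E : Set Ω) : ℝ :=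
  ∑ ω, if ω ∈ E then p ω else 0

/-- KL divergence `D(P‖Q)`; terms with `P x = 0` vanish automatically. -/
def KL {β : Type*} [Fintype β] (P Q : β → ℝ) : ℝ :=
  ∑ x, P x * Real.log (P x / Q x)

open Finset Real

section Prob

variable {Ω : Type*} [Fintype Ω] {p : Ω → ℝ}

theorem prob_mono (hp : ∀ ω, 0 ≤ p ω) {E F : Set Ω} (h : E ⊆ F) : prob p E ≤ prob p F :=
  sum_le_sum fun ω _ => by
    by_cases hE : ω ∈ E
    · simp [hE, h hE]
    · by_cases hF : ω ∈ F <;> simp [hE, hF, hp ω]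

theorem prob_univ : prob p Set.univ = ∑ ω, p ω := by
  simp [prob]

theorem prob_compl (E : Set Ω) : prob p Eᶜ = ∑ ω, p ω - prob p E := by
  rw [eq_sub_iff_add_eq, prob, prob, ← sum_add_distrib]
  refine sum_congr rfl fun ω _ => ?_
  by_cases h : ω ∈ E <;> simp [h]

theorem prob_union_le (hp : ∀ ω, 0 ≤ p ω) (E F : Set Ω) :
    prob p (E ∪ F) ≤ prob p E + prob p F := by
  rw [prob, prob, prob, ← sum_add_distrib]
  refine sum_le_sum fun ω _ => ?_
  by_cases hE : ω ∈ E <;> by_cases hF : ω ∈ F <;> simp [hE, hF, hp ω]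

theorem prob_iUnion_le {ι : Type*} [Fintype ι] (hp : ∀ ω, 0 ≤ p ω) (E : ι → Set Ω) :
    prob p (⋃ i, E i) ≤ ∑ i, prob p (E i) := by
  have hterm : ∀ ω i, 0 ≤ if ω ∈ E i then p ω else 0 := fun ω i => by
    split_ifs <;> simp [hp ω]
  simp only [prob]
  rw [sum_comm]
  refine sum_le_sum fun ω _ => ?_
  split_ifs with h
  · obtain ⟨i, hi⟩ := Set.mem_iUnion.1 h
    simpa [hi] using single_le_sum (fun i _ => hterm ω i) (mem_univ i)
  · exact sum_nonneg fun i _ => hterm ω i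

theorem prob_le_sum_mul_exp (hp : ∀ ω, 0 ≤ p ω) {E : Set Ω} {f : Ω → ℝ}
    (hf : ∀ ω ∈ E, 0 ≤ f ω) : prob p E ≤ ∑ ω, p ω * exp (f ω) :=
  sum_le_sum fun ω _ => by
    split_ifs with h
    · exact le_mul_of_one_le_right (hp ω) (one_le_exp (hf ω h))
    · exact mul_nonneg (hp ω) (exp_pos _).le

end Prob

section Sampling

variable {α : Type*} {N : ℕ}

def iidDensity (P : α → ℝ) (N : ℕ) (s : Fin N → α) : ℝ :=
  ∏ j, P (s j)

def symbolCount (s : Fin N → α) (i : α) : ℕ :=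
  #{j | s j = i}

theorem iidDensity_nonneg {P : α → ℝ} (hP0 : ∀ x, 0 ≤ P x) (s : Fin N → α) :
    0 ≤ iidDensity P N s :=
  prod_nonneg fun j _ => hP0 (s j)

variable [Fintype α]

theorem sum_iidDensity {P : α → ℝ} (hP1 : ∑ x, P x = 1) : ∑ s, iidDensity P N s = 1 := by
  simp only [iidDensity, ← Fintype.sum_pow, hP1, one_pow]

theorem sum_symbolCount (s : Fin N → α) : ∑ i, symbolCount s i = N := by
  simpa [symbolCount] using
    (card_eq_sum_card_fiberwise (f := s) (s := univ) (t := univ) (by simp)).symm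

theorem sum_iidDensity_mul_exp_symbolCount (P : α → ℝ) (N : ℕ) (i : α) (w : ℝ) :
    ∑ s, iidDensity P N s * exp (w * symbolCount s i) = (∑ x, P x + P i * (exp w - 1)) ^ N := by
  have hfactor : ∑ x, P x * exp (w * if x = i then 1 else 0) = ∑ x, P x + P i * (exp w - 1) := by
    have hterm : ∀ x, P x * exp (w * if x = i then 1 else 0)
        = P x + if x = i then P i * (exp w - 1) else 0 := fun x => by
      by_cases hx : x = i
      · rw [hx, if_pos rfl, if_pos rfl, mul_one]
        ring
      · simp [hx]
    simp only [hterm, sum_add_distrib, sum_ite_eq', mem_univ, if_true]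
  rw [← hfactor, Fintype.sum_pow]
  refine sum_congr rfl fun s _ => ?_
  rw [symbolCount, natCast_card_filter, mul_sum, exp_sum, iidDensity, ← prod_mul_distrib]

theorem sum_iidDensity_mul_exp_le {P : α → ℝ} (hP0 : ∀ x, 0 ≤ P x) (hP1 : ∑ x, P x = 1)
    (i : α) (w m : ℝ) :
    ∑ s, iidDensity P N s * exp (w * (symbolCount s i - m))
      ≤ exp (N * P i * (exp w - 1) - w * m) := by
  have hPi : P i ≤ 1 := hP1 ▸ single_le_sum (fun x _ => hP0 x) (mem_univ i)
  calc ∑ s, iidDensity P N s * exp (w * (symbolCount s i - m))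
      = exp (-(w * m)) * ∑ s, iidDensity P N s * exp (w * symbolCount s i) := by
        rw [mul_sum]
        refine sum_congr rfl fun s _ => ?_
        rw [mul_sub, sub_eq_add_neg, exp_add]
        ring
    _ = exp (-(w * m)) * (1 + P i * (exp w - 1)) ^ N := by
        rw [sum_iidDensity_mul_exp_symbolCount, hP1]
    _ ≤ exp (-(w * m)) * exp (P i * (exp w - 1)) ^ N := by
        gcongr
        · nlinarith [exp_pos w, hP0 i]
        · linarith [add_one_le_exp (P i * (exp w - 1))]
    _ = exp (N * P i * (exp w - 1) - w * m) := by
        rw [← exp_nat_mul, ← exp_add]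
        ring_nf

end Sampling

theorem chernoff_exponent_le {ν d : ℝ} (hν : 0 < ν) (hd : |d| ≤ 2 * ν) :
    ν * (exp (d / (2 * ν)) - 1) - d / (2 * ν) * (ν + d) ≤ -(d ^ 2 / (4 * ν)) := by
  have hx : |d / (2 * ν)| ≤ 1 := by
    rw [abs_div, abs_of_pos (by positivity : (0 : ℝ) < 2 * ν)]
    exact (div_le_one (by positivity)).2 hd
  have hexp := mul_le_mul_of_nonneg_left (abs_le.1 (abs_exp_sub_one_sub_id_le hx)).2 hν.le
  have hquad : ν * (d / (2 * ν) + (d / (2 * ν)) ^ 2) - d / (2 * ν) * (ν + d)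
      = -(d ^ 2 / (4 * ν)) := by
    field_simp
    ring
  nlinarith

section Tails

variable {α : Type*} [Fintype α] {N : ℕ} {P : α → ℝ}

theorem prob_le_symbolCount_le (hP0 : ∀ x, 0 ≤ P x) (hP1 : ∑ x, P x = 1) (i : α)
    {m w : ℝ} (hw : 0 ≤ w) :
    prob (iidDensity P N) {s | m ≤ symbolCount s i}
      ≤ exp (N * P i * (exp w - 1) - w * m) :=
  (prob_le_sum_mul_exp (iidDensity_nonneg hP0) fun _ hs =>
    mul_nonneg hw (sub_nonneg.2 hs)).trans (sum_iidDensity_mul_exp_le hP0 hP1 i w m)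

theorem prob_symbolCount_le_le (hP0 : ∀ x, 0 ≤ P x) (hP1 : ∑ x, P x = 1) (i : α)
    {m w : ℝ} (hw : w ≤ 0) :
    prob (iidDensity P N) {s | (symbolCount s i : ℝ) ≤ m}
      ≤ exp (N * P i * (exp w - 1) - w * m) :=
  (prob_le_sum_mul_exp (iidDensity_nonneg hP0) fun _ hs =>
    mul_nonneg_of_nonpos_of_nonpos hw (sub_nonpos.2 hs)).trans
      (sum_iidDensity_mul_exp_le hP0 hP1 i w m)

theorem prob_add_sqrt_le_symbolCount_le (hP0 : ∀ x, 0 ≤ P x) (hP1 : ∑ x, P x = 1) (i : α)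
    {L : ℝ} (hL : 0 ≤ L) :
    prob (iidDensity P N) {s | N * P i + √(4 * (N * P i) * L) + 2 * L ≤ symbolCount s i}
      ≤ exp (-L) := by
  rw [add_assoc]
  set ν : ℝ := N * P i
  set d := √(4 * ν * L) + 2 * L
  have hν0 : 0 ≤ ν := mul_nonneg N.cast_nonneg (hP0 i)
  have hsqrt := sqrt_nonneg (4 * ν * L)
  rcases le_or_gt ν (d / 2) with hνd | hdν
  · -- Poisson regime: `w = 1` suffices since `e - 2 < 1`
    refine (prob_le_symbolCount_le hP0 hP1 i zero_le_one).trans (exp_le_exp.2 ?_)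
    nlinarith [exp_one_lt_three]
  · have hν : 0 < ν := by linarith
    refine (prob_le_symbolCount_le hP0 hP1 i (m := ν + d) (w := d / (2 * ν))
      (by positivity)).trans (exp_le_exp.2 ?_)
    refine (chernoff_exponent_le hν (by rw [abs_of_nonneg (by positivity)]; linarith)).trans ?_
    rw [neg_le_neg_iff, le_div_iff₀ (by positivity)]
    nlinarith [sq_sqrt (by positivity : 0 ≤ 4 * ν * L)]

theorem prob_symbolCount_lt_sub_sqrt_le (hP0 : ∀ x, 0 ≤ P x) (hP1 : ∑ x, P x = 1) (i : α)
    {L : ℝ} (hL : 0 ≤ L) :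
    prob (iidDensity P N) {s | (symbolCount s i : ℝ) < N * P i - √(4 * (N * P i) * L)}
      ≤ exp (-L) := by
  set ν : ℝ := N * P i
  set d := √(4 * ν * L)
  rcases le_or_gt ν d with hνd | hdν
  · have hempty : {s : Fin N → α | (symbolCount s i : ℝ) < ν - d} = ∅ :=
      Set.eq_empty_of_forall_notMem fun s (hs : (symbolCount s i : ℝ) < ν - d) =>
        (Nat.cast_nonneg (symbolCount s i)).not_gt (hs.trans_le (by linarith))
    simp [hempty, prob, (exp_pos _).le]
  · have hν : 0 < ν := (sqrt_nonneg _).trans_lt hdν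
    refine (prob_mono (iidDensity_nonneg hP0) (F := {s | (symbolCount s i : ℝ) ≤ ν + -d})
      fun s (hs : (symbolCount s i : ℝ) < ν - d) =>
        show (symbolCount s i : ℝ) ≤ ν + -d by linarith).trans ?_
    refine (prob_symbolCount_le_le hP0 hP1 i (m := ν + -d) (w := -d / (2 * ν))
      (div_nonpos_of_nonpos_of_nonneg (neg_nonpos.2 (sqrt_nonneg _)) (by positivity))).trans
      (exp_le_exp.2 ?_)
    have hd : |-d| ≤ 2 * ν := by rw [abs_neg, abs_of_nonneg (sqrt_nonneg _)]; linarith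
    refine (chernoff_exponent_le hν hd).trans (le_of_eq ?_)
    rw [neg_sq, sq_sqrt (by positivity)]
    field_simp

end Tails

section Typical

variable {α : Type*} [Fintype α] {N : ℕ} {P : α → ℝ}

def typicalSet (P : α → ℝ) (N : ℕ) (L : ℝ) : Set (Fin N → α) :=
  {s | ∀ i, N * P i - √(4 * (N * P i) * L) ≤ symbolCount s i ∧
    (symbolCount s i : ℝ) < N * P i + √(4 * (N * P i) * L) + 2 * L}

theorem prob_compl_typicalSet_le (hP0 : ∀ x, 0 ≤ P x) (hP1 : ∑ x, P x = 1) {L : ℝ}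
    (hL : 0 ≤ L) :
    prob (iidDensity P N) (typicalSet P N L)ᶜ ≤ 2 * Fintype.card α * exp (-L) := by
  have hcompl : (typicalSet P N L)ᶜ = ⋃ i,
      ({s | (symbolCount s i : ℝ) < N * P i - √(4 * (N * P i) * L)} ∪
        {s | N * P i + √(4 * (N * P i) * L) + 2 * L ≤ symbolCount s i}) := by
    ext s
    simp only [typicalSet, Set.mem_compl_iff, Set.mem_ofPred_eq, not_forall, not_and_or, not_le,
      not_lt, Set.mem_iUnion, Set.mem_union]
  rw [hcompl]
  refine (prob_iUnion_le (iidDensity_nonneg hP0) _).trans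
    ((sum_le_sum fun i _ => (prob_union_le (iidDensity_nonneg hP0) _ _).trans
      (add_le_add (prob_symbolCount_lt_sub_sqrt_le hP0 hP1 i hL)
        (prob_add_sqrt_le_symbolCount_le hP0 hP1 i hL))).trans_eq ?_)
  rw [sum_const, card_univ, nsmul_eq_mul]
  ring

theorem one_sub_le_prob_typicalSet [Nonempty α] (hP0 : ∀ x, 0 ≤ P x) (hP1 : ∑ x, P x = 1)
    {δ : ℝ} (hδ0 : 0 < δ) (hδ1 : δ ≤ 1) :
    1 - δ ≤ prob (iidDensity P N) (typicalSet P N (log (2 * Fintype.card α / δ))) := by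
  have hK : (1 : ℝ) ≤ Fintype.card α := Nat.one_le_cast.2 Fintype.card_pos
  have hbad := prob_compl_typicalSet_le (N := N) hP0 hP1
    (log_nonneg ((one_le_div hδ0).2 (by linarith)) : 0 ≤ log (2 * Fintype.card α / δ))
  rw [prob_compl, sum_iidDensity hP1, exp_neg, exp_log (by positivity)] at hbad
  field_simp at hbad
  linarith

end Typical

theorem KL_le_sum_of_pos {β : Type*} [Fintype β] {P Q : β → ℝ} (hP1 : ∑ x, P x = 1)
    (hQ1 : ∑ x, Q x = 1) (hQ : ∀ x, 0 < Q x) {c : ℝ} (hc : 0 < c) :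
    KL P Q ≤ ∑ x, (P x * log (P x / (c * Q x)) + c * Q x - P x) := by
  have hterm : ∀ x, P x * log (P x / Q x) = P x * log (P x / (c * Q x)) + P x * log c := by
    intro x
    rcases eq_or_ne (P x) 0 with h | h
    · simp [h]
    rw [← mul_add, ← log_mul (div_ne_zero h (mul_pos hc (hQ x)).ne') hc.ne']
    congr 2
    field_simp
  calc KL P Q = ∑ x, P x * log (P x / (c * Q x)) + log c := by
        simp only [KL, hterm, sum_add_distrib, ← sum_mul, hP1, one_mul]
    _ ≤ ∑ x, P x * log (P x / (c * Q x)) + (c - 1) := by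
        gcongr
        exact log_le_sub_one_of_pos hc
    _ = ∑ x, (P x * log (P x / (c * Q x)) + c * Q x - P x) := by
        rw [sum_sub_distrib, sum_add_distrib, ← mul_sum, hQ1, hP1]
        ring

theorem mul_log_div_add_sub_le_of_le {ν x n L : ℝ} (hν0 : 0 ≤ ν) (hνn : ν ≤ n) (hn : 1 ≤ n)
    (hx : 0 ≤ x) (hL : 1 / 2 ≤ L) (hνL : ν ≤ 16 * L) (hup : x < ν + √(4 * ν * L) + 2 * L) :
    ν * log (ν / (x + 1)) + (x + 1) - ν ≤ L * (16 * log n + 20) := by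
  have hsqrt : √(4 * ν * L) ≤ 8 * L :=
    (sqrt_le_left (by linarith)).2 (by nlinarith)
  have hlog : ν * log (ν / (x + 1)) ≤ 16 * L * log n := by
    rcases hν0.eq_or_lt with h | h
    · rw [← h, zero_mul]
      exact mul_nonneg (by linarith) (log_nonneg hn)
    calc ν * log (ν / (x + 1)) ≤ ν * log n :=
          mul_le_mul_of_nonneg_left (log_le_log (by positivity)
            ((div_le_self hν0 (by linarith)).trans hνn)) hν0
      _ ≤ 16 * L * log n := mul_le_mul_of_nonneg_right hνL (log_nonneg hn)
  linarith

theorem mul_log_div_add_sub_le_of_ge {ν x L : ℝ} (hL : 1 / 2 ≤ L)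
    (hνL : 16 * L ≤ ν) (hlow : ν - √(4 * ν * L) ≤ x) (hup : x < ν + √(4 * ν * L) + 2 * L) :
    ν * log (ν / (x + 1)) + (x + 1) - ν ≤ 20 * L := by
  have hν : 0 < ν := by linarith
  set d := √(4 * ν * L)
  have hd0 : 0 ≤ d := sqrt_nonneg _
  have hd2 : d ^ 2 = 4 * ν * L := sq_sqrt (by positivity)
  have hdν : d ≤ ν / 2 := by nlinarith
  have ht : ν / 2 < x + 1 := by linarith
  have ht0 : 0 < x + 1 := by linarith
  have hlog : ν * log (ν / (x + 1)) ≤ ν * (ν / (x + 1) - 1) :=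
    mul_le_mul_of_nonneg_left (log_le_sub_one_of_pos (div_pos hν ht0)) hν.le
  have hchi : ν * (ν / (x + 1) - 1) + (x + 1) - ν ≤ 20 * L := by
    rw [show ν * (ν / (x + 1) - 1) + (x + 1) - ν = (x + 1 - ν) ^ 2 / (x + 1) by
      field_simp [ht0.ne']; ring, div_le_iff₀ ht0]
    have hdev : (x + 1 - ν) ^ 2 ≤ (d + 4 * L) ^ 2 := sq_le_sq' (by linarith) (by linarith)
    nlinarith [sq_nonneg (d - 4 * L)]
  linarith

theorem mul_log_div_add_sub_le {ν x n L : ℝ} (hν0 : 0 ≤ ν) (hνn : ν ≤ n) (hn : 1 ≤ n)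
    (hx : 0 ≤ x) (hL : 1 / 2 ≤ L) (hlow : ν - √(4 * ν * L) ≤ x)
    (hup : x < ν + √(4 * ν * L) + 2 * L) :
    ν * log (ν / (x + 1)) + (x + 1) - ν ≤ L * (16 * log n + 20) := by
  rcases le_total ν (16 * L) with hνL | hνL
  · exact mul_log_div_add_sub_le_of_le hν0 hνn hn hx hL hνL hup
  · have := mul_log_div_add_sub_le_of_ge hL hνL hlow hup
    nlinarith [mul_nonneg (show 0 ≤ L by linarith) (log_nonneg hn)]

section Estimator

variable {α : Type*} [Fintype α] {N : ℕ} {P : α → ℝ}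

theorem sum_symbolCount_add_one_div (hN : 0 < N) (s : Fin N → α) :
    ∑ i, ((symbolCount s i : ℝ) + 1) / (N + Fintype.card α) = 1 := by
  rw [← sum_div, sum_add_distrib, ← Nat.cast_sum, sum_symbolCount, sum_const, card_univ,
    nsmul_one]
  exact div_self (by positivity)

theorem KL_le_of_mem_typicalSet (hP0 : ∀ x, 0 ≤ P x) (hP1 : ∑ x, P x = 1) (hN : 0 < N)
    {L : ℝ} (hL : 1 / 2 ≤ L) {s : Fin N → α} (hs : s ∈ typicalSet P N L) :
    KL P (fun i => ((symbolCount s i : ℝ) + 1) / (N + Fintype.card α))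
      ≤ Fintype.card α * L * (16 * log N + 20) / N := by
  set n : ℝ := (N : ℝ)
  set K : ℝ := (Fintype.card α : ℝ)
  have hn : 1 ≤ n := Nat.one_le_cast.2 hN
  have hnK : n + K ≠ 0 := by positivity
  have hterm : ∀ i, P i * log (P i / ((n + K) / n * ((symbolCount s i + 1) / (n + K))))
      + (n + K) / n * ((symbolCount s i + 1) / (n + K)) - P i
      = (n * P i * log (n * P i / (symbolCount s i + 1)) + (symbolCount s i + 1) - n * P i) / n := by
    intro i
    have hscale : (n + K) / n * ((symbolCount s i + 1) / (n + K)) = (symbolCount s i + 1) / n := by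
      rw [div_mul_div_comm, mul_comm (n + K), mul_div_mul_right _ _ hnK]
    rw [hscale, div_div_eq_mul_div, mul_comm (P i) n]
    field_simp
  have hsymbol : ∀ i, n * P i * log (n * P i / (symbolCount s i + 1)) + (symbolCount s i + 1)
      - n * P i ≤ L * (16 * log n + 20) := fun i =>
    have hPi : P i ≤ 1 := hP1 ▸ single_le_sum (fun x _ => hP0 x) (mem_univ i)
    mul_log_div_add_sub_le (by have := hP0 i; positivity)
      (mul_le_of_le_one_right (by positivity) hPi) hn (Nat.cast_nonneg _) hL (hs i).1 (hs i).2
  calc _ ≤ ∑ i, (P i * log (P i / ((n + K) / n * ((symbolCount s i + 1) / (n + K))))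
          + (n + K) / n * ((symbolCount s i + 1) / (n + K)) - P i) :=
        KL_le_sum_of_pos hP1 (sum_symbolCount_add_one_div hN s) (fun i => by positivity)
          (by positivity)
    _ ≤ ∑ _i : α, L * (16 * log n + 20) / n := by
        simp only [hterm]
        exact sum_le_sum fun i _ => div_le_div_of_nonneg_right (hsymbol i) (by positivity)
    _ = K * L * (16 * log n + 20) / n := by
        rw [sum_const, card_univ, nsmul_eq_mul]
        ring

end Estimator

-- `log (2K/δ) ≤ 2 log (K/δ)` and `20 ≤ 29 log n`
theorem card_mul_log_div_le {K δ n : ℝ} (hK : 2 ≤ K) (hδ0 : 0 < δ) (hδ1 : δ < 1) (hn : 2 ≤ n) :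
    K * log (2 * K / δ) * (16 * log n + 20) / n ≤ 100 * K * log (K / δ) * log n / n := by
  have hlog2 := log_two_gt_d9
  have hKδ : log 2 ≤ log (K / δ) := log_le_log (by norm_num) ((le_div_iff₀ hδ0).2 (by nlinarith))
  have hlogn : log 2 ≤ log n := log_le_log (by norm_num) hn
  rw [show 2 * K / δ = 2 * (K / δ) by ring, log_mul (by norm_num) (by positivity)]
  have hconst : (log 2 + log (K / δ)) * (16 * log n + 20) ≤ 100 * log (K / δ) * log n := by
    nlinarith
  gcongr ?_ / n
  nlinarith [mul_le_mul_of_nonneg_left hconst (by linarith : (0 : ℝ) ≤ K)]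

theorem KL_eq_zero_of_subsingleton {β : Type*} [Fintype β] [Subsingleton β] {P Q : β → ℝ}
    (hP1 : ∑ x, P x = 1) (hQ1 : ∑ x, Q x = 1) : KL P Q = 0 :=
  sum_eq_zero fun x _ => by
    rw [Fintype.sum_subsingleton _ x] at hP1 hQ1
    simp [hP1, hQ1]

/-- High-probability guarantee for the add-1 (Laplace) estimator
(Theorem 6.1): with probability `1 − δ`,
`D(P‖Q) ≤ C·|Σ|·log(|Σ|/δ)·log N / N`. -/
theorem stmt15 :
    ∃ C : ℝ, 0 < C ∧
      ∀ (α : Type) [Fintype α], ∀ P : α → ℝ,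
        (∀ i, 0 ≤ P i) → (∑ i, P i = 1) →
        ∀ N : ℕ, 2 ≤ N →
        ∀ δ : ℝ, δ ∈ Set.Ioo (0 : ℝ) 1 →
        1 - δ ≤
          prob (fun s : Fin N → α => ∏ j, P (s j))
            {s |
              KL P (fun i =>
                  (((Finset.univ.filter (fun j => s j = i)).card : ℝ) + 1) /
                    ((N : ℝ) + Fintype.card α)) ≤
                C * (Fintype.card α : ℝ) * Real.log (Fintype.card α / δ) *
                  Real.log N / N} := by
  refine ⟨100, by norm_num, fun α _ P hP0 hP1 N hN δ ⟨hδ0, hδ1⟩ => ?_⟩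
  change 1 - δ ≤ prob (iidDensity P N)
    {s | KL P (fun i => ((symbolCount s i : ℝ) + 1) / (N + Fintype.card α)) ≤ _}
  have hN0 : 0 < N := by omega
  have : Nonempty α := by
    by_contra h
    simp [not_nonempty_iff.1 h] at hP1
  rcases (Nat.succ_le_of_lt (Fintype.card_pos (α := α))).eq_or_lt with hK | hK
  · have : Subsingleton α := Fintype.card_le_one_iff_subsingleton.1 hK.ge
    calc 1 - δ ≤ prob (iidDensity P N) Set.univ := by
          rw [prob_univ, sum_iidDensity hP1]
          linarith
      _ ≤ _ := prob_mono (iidDensity_nonneg hP0) fun s _ => by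
          rw [Set.mem_ofPred_eq, KL_eq_zero_of_subsingleton hP1 (sum_symbolCount_add_one_div hN0 s),
            ← hK, Nat.cast_one]
          have : 0 ≤ log (1 / δ) := log_nonneg ((one_le_div hδ0).2 hδ1.le)
          positivity
  · have hK2 : (2 : ℝ) ≤ Fintype.card α := by exact_mod_cast hK
    have hL : 1 / 2 ≤ log (2 * Fintype.card α / δ) := by
      have h2 : (2 : ℝ) ≤ 2 * Fintype.card α / δ := (le_div_iff₀ hδ0).2 (by nlinarith)
      linarith [log_le_log two_pos h2, log_two_gt_d9]
    calc 1 - δ ≤ prob (iidDensity P N) (typicalSet P N (log (2 * Fintype.card α / δ))) :=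
          one_sub_le_prob_typicalSet hP0 hP1 hδ0 hδ1.le
      _ ≤ _ := prob_mono (iidDensity_nonneg hP0) fun s hs =>
          (KL_le_of_mem_typicalSet hP0 hP1 hN0 hL hs).trans
            (card_mul_log_div_le hK2 hδ0 hδ1 (by exact_mod_cast hN))

end
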